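/- arXiv:2212.09165 — 3 statements merged into one kernel-verified Lean document; each statement's English description precedes it below -/
import Mathlib

section
/- If G has a Hamiltonian (TSP) tour of cost at most K, then G' (c copies of G glued at v, with metric-completion edge-costs) has a Hamiltonian tour of cost at most cK. -/
/-!
Cut the tour `σ` open at `v` and traverse the resulting path `σ v, σ² v, …, σ⁻¹ v` once in each
copy, passing through `v` between consecutive copies and at the two ends. Inside a copy every
edge is an edge of `σ` with its cost in `G`, and each passage `x → v → σ v` through the glued
vertex costs `d x v + d v (σ v)`, the two edges of `σ` at `v`; so the new tour costs exactly
`c` times the old one. It visits every vertex because within a copy it follows `σ`, a single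
cycle through `v`.
-/

open Equiv Equiv.Perm Finset

theorem Equiv.Perm.SameCycle.of_forall_apply {α : Type*} [Finite α] {f : Perm α} {x y : α}
    {p : α → Prop} (hxy : f.SameCycle x y) (hx : p x) (hp : ∀ z, p z → p (f z)) : p y := by
  obtain ⟨k, -, rfl⟩ := hxy.exists_nat_pow_eq
  clear hxy
  induction k with
  | zero => exact hx
  | succ k ih => rw [pow_succ', mul_apply]; exact hp _ ih

theorem Equiv.Perm.support_eq_univ_of_forall_sameCycle {α : Type*} [Fintype α] [DecidableEq α]
    {f : Perm α} {x : α} (hx : f x ≠ x) (h : ∀ y, f.SameCycle x y) : f.support = univ :=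
  eq_univ_of_forall fun y => mem_support.2 fun hy => hx ((h y).apply_eq_self_iff.2 hy)

section GluedTour

variable {V : Type*} [DecidableEq V] (σ : Perm V) (v : V) (hv : σ v ≠ v) (c : ℕ)

abbrev GluedVertex (V : Type*) (v : V) (c : ℕ) : Type _ := Unit ⊕ Fin c × {x : V // x ≠ v}

def enterCopy (i : ℕ) : GluedVertex V v c :=
  if h : i < c then .inr (⟨i, h⟩, ⟨σ v, hv⟩) else .inl ()

def gluedNext : GluedVertex V v c → GluedVertex V v c
  | .inl () => enterCopy σ v hv c 0
  | .inr (i, x) => if hx : σ x = v then enterCopy σ v hv c (i + 1) else .inr (i, ⟨σ x, hx⟩)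

variable {σ v}

theorem exists_iterate_gluedNext_eq [Finite V] (hσ : ∀ y, σ.SameCycle v y)
    (p : GluedVertex V v c) : ∃ k, (gluedNext σ v hv c)^[k] (enterCopy σ v hv c 0) = p := by
  set R : GluedVertex V v c → Prop :=
    fun p => ∃ k, (gluedNext σ v hv c)^[k] (enterCopy σ v hv c 0) = p
  have hR : ∀ p, R p → R (gluedNext σ v hv c p) := fun p ⟨k, hk⟩ =>
    ⟨k + 1, by rw [Function.iterate_succ_apply', hk]⟩
  have hcopy : ∀ (i : Fin c), R (.inr (i, ⟨σ v, hv⟩)) → ∀ x, R (.inr (i, x)) := by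
    intro i hi x
    refine (hσ x.1).of_forall_apply (p := fun y => ∀ hy : y ≠ v, R (.inr (i, ⟨y, hy⟩)))
      (fun h => absurd rfl h) (fun y hy hσy => ?_) x.2
    by_cases hyv : y = v
    · subst hyv; exact hi
    · simpa [gluedNext, hσy] using hR _ (hy hyv)
  have henter : ∀ i, R (enterCopy σ v hv c i) := by
    intro i
    induction i with
    | zero => exact ⟨0, rfl⟩
    | succ i ih =>
      by_cases hi : i < c
      · have hv' : σ⁻¹ v ≠ v := fun h => hv (inv_eq_iff_eq.1 h).symm
        have := hR _ (hcopy ⟨i, hi⟩ (by simpa [enterCopy, hi] using ih) ⟨σ⁻¹ v, hv'⟩)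
        simpa [gluedNext] using this
      · simpa only [enterCopy, hi, show ¬ i + 1 < c by omega, dite_false] using ih
  rcases p with ⟨⟨⟩⟩ | ⟨i, x⟩
  · have h := henter c
    simp only [enterCopy, lt_irrefl, dite_false] at h
    exact h
  · exact hcopy i (by simpa only [enterCopy, i.2, dite_true] using henter i) x

theorem gluedNext_bijective [Finite V] (hσ : ∀ y, σ.SameCycle v y) :
    Function.Bijective (gluedNext σ v hv c) := by
  refine Finite.surjective_iff_bijective.1 fun p => ?_
  obtain ⟨k, rfl⟩ := exists_iterate_gluedNext_eq hv c hσ p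
  exact ⟨_, (Function.iterate_succ_apply' _ k (.inl ())).symm.trans
    (Function.iterate_succ_apply _ k _)⟩

noncomputable def gluedTour [Finite V] (hσ : ∀ y, σ.SameCycle v y) : Perm (GluedVertex V v c) :=
  Equiv.ofBijective _ (gluedNext_bijective hv c hσ)

theorem sameCycle_gluedTour [Finite V] (hσ : ∀ y, σ.SameCycle v y) (p : GluedVertex V v c) :
    (gluedTour hv c hσ).SameCycle (.inl ()) p := by
  obtain ⟨k, rfl⟩ := exists_iterate_gluedNext_eq hv c hσ p
  exact ⟨(k + 1 : ℕ), by rw [zpow_natCast, ← iterate_eq_pow, Function.iterate_succ_apply]; rfl⟩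

theorem gluedTour_inl_ne [Finite V] (hσ : ∀ y, σ.SameCycle v y) (hc : 0 < c) :
    gluedTour hv c hσ (.inl ()) ≠ .inl () := by
  simp [gluedTour, gluedNext, enterCopy, hc]

theorem cost_gluedNext_inr (d : V → V → ℝ) (D : GluedVertex V v c → GluedVertex V v c → ℝ)
    (hDxv : ∀ p : Fin c × {x : V // x ≠ v}, D (.inr p) (.inl ()) = d p.2.1 v)
    (hDsame : ∀ (i : Fin c) (x y : {x : V // x ≠ v}), D (.inr (i, x)) (.inr (i, y)) = d x.1 y.1)
    (hDdiff : ∀ (i j : Fin c) (x y : {x : V // x ≠ v}), i ≠ j →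
      D (.inr (i, x)) (.inr (j, y)) = d x.1 v + d v y.1)
    (i : Fin c) (x : {x : V // x ≠ v}) :
    D (.inr (i, x)) (gluedNext σ v hv c (.inr (i, x))) =
      d x (σ x) + if σ x = v ∧ i.1 + 1 < c then d v (σ v) else 0 := by
  by_cases hx : σ x = v
  · by_cases hi : i.1 + 1 < c
    · rw [gluedNext, dif_pos hx, enterCopy, dif_pos hi,
        hDdiff _ _ _ _ (Fin.ne_of_val_ne (by simp)), hx]
      simp [hi]
    · simp [gluedNext, enterCopy, hx, hi, hDxv]
  · simp [gluedNext, hx, hDsame]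

theorem sum_cost_gluedNext [Fintype V] (hc : 0 < c) (d : V → V → ℝ)
    (D : GluedVertex V v c → GluedVertex V v c → ℝ)
    (hDvx : ∀ p : Fin c × {x : V // x ≠ v}, D (.inl ()) (.inr p) = d v p.2.1)
    (hDxv : ∀ p : Fin c × {x : V // x ≠ v}, D (.inr p) (.inl ()) = d p.2.1 v)
    (hDsame : ∀ (i : Fin c) (x y : {x : V // x ≠ v}), D (.inr (i, x)) (.inr (i, y)) = d x.1 y.1)
    (hDdiff : ∀ (i j : Fin c) (x y : {x : V // x ≠ v}), i ≠ j →
      D (.inr (i, x)) (.inr (j, y)) = d x.1 v + d v y.1) :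
    ∑ p, D p (gluedNext σ v hv c p) = c * ∑ x, d x (σ x) := by
  have hv' : σ⁻¹ v ≠ v := fun h => hv (inv_eq_iff_eq.1 h).symm
  have hlast : ∀ x : {x : V // x ≠ v}, σ x = v ↔ x = ⟨σ⁻¹ v, hv'⟩ := fun x => by
    rw [Subtype.ext_iff, eq_inv_iff_eq]
  have hentries : ∑ i : Fin c, ∑ x : {x : V // x ≠ v},
      (if σ x = v ∧ i.1 + 1 < c then d v (σ v) else 0) = (c - 1 : ℕ) * d v (σ v) := by
    obtain ⟨c, rfl⟩ := Nat.exists_eq_succ_of_ne_zero hc.ne'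
    simp [hlast, and_comm (a := _ = _), ite_and, Fin.sum_univ_castSucc]
  have hfirst : D (.inl ()) (gluedNext σ v hv c (.inl ())) = d v (σ v) := by
    simp [gluedNext, enterCopy, hc, hDvx]
  rw [Fintype.sum_sum_type, Fintype.sum_prod_type, Fintype.sum_unique, PUnit.default_eq_unit,
    hfirst]
  simp only [cost_gluedNext_inr hv c d D hDxv hDsame hDdiff, Finset.sum_add_distrib, hentries,
    Finset.sum_const, card_univ, Fintype.card_fin, nsmul_eq_mul]
  rw [Fintype.sum_eq_add_sum_subtype_ne _ v, Nat.cast_sub hc, Nat.cast_one]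
  ring

end GluedTour

theorem stmt_5_general {V : Type*} [Fintype V] [DecidableEq V]
    (d : V → V → ℝ) (v : V)
    (c : ℕ) (hc : 1 ≤ c)
    (D : (Unit ⊕ Fin c × {x : V // x ≠ v}) → (Unit ⊕ Fin c × {x : V // x ≠ v}) → ℝ)
    (hDvx : ∀ p : Fin c × {x : V // x ≠ v}, D (Sum.inl ()) (Sum.inr p) = d v p.2.1)
    (hDxv : ∀ p : Fin c × {x : V // x ≠ v}, D (Sum.inr p) (Sum.inl ()) = d p.2.1 v)
    (hDsame : ∀ (i : Fin c) (x y : {x : V // x ≠ v}),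
      D (Sum.inr (i, x)) (Sum.inr (i, y)) = d x.1 y.1)
    (hDdiff : ∀ (i j : Fin c) (x y : {x : V // x ≠ v}), i ≠ j →
      D (Sum.inr (i, x)) (Sum.inr (j, y)) = d x.1 v + d v y.1)
    (K : ℝ)
    (σ : Equiv.Perm V) (hσ : σ.IsCycle) (hσs : σ.support = Finset.univ)
    (hK : ∑ x : V, d x (σ x) ≤ K) :
    ∃ τ : Equiv.Perm (Unit ⊕ Fin c × {x : V // x ≠ v}),
      τ.IsCycle ∧ τ.support = Finset.univ ∧
      ∑ p, D p (τ p) ≤ c * K := by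
  have hsupp : ∀ x, x ∈ σ.support := fun x => hσs ▸ mem_univ x
  have hv : σ v ≠ v := mem_support.1 (hsupp v)
  have hcyc : ∀ y, σ.SameCycle v y := fun y => hσ.sameCycle hv (mem_support.1 (hsupp y))
  have hne := gluedTour_inl_ne hv c hcyc hc
  refine ⟨gluedTour hv c hcyc, ⟨.inl (), hne, fun p _ => sameCycle_gluedTour hv c hcyc p⟩,
    support_eq_univ_of_forall_sameCycle hne (sameCycle_gluedTour hv c hcyc), ?_⟩
  calc ∑ p, D p (gluedTour hv c hcyc p) = c * ∑ x, d x (σ x) :=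
        sum_cost_gluedNext hv c hc d D hDvx hDxv hDsame hDdiff
    _ ≤ c * K := by gcongr

/-- If `G` (complete graph on `V`, metric costs in `{1,2}`) has a Hamiltonian tour of
cost at most `K`, then `G'` (the metric completion of `c` copies of `G` glued at `v`,
with inter-copy cost `d x v + d v y`) has a Hamiltonian tour of cost at most `c*K`.
Hamiltonian tours are encoded as cyclic permutations with full support; the vertex set
of `G'` is `Unit ⊕ Fin c × {x // x ≠ v}` where `Sum.inl ()` is the glued vertex `v`. -/
theorem stmt_5 {V : Type*} [Fintype V] [DecidableEq V]
    (hcard : 3 ≤ Fintype.card V)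
    (d : V → V → ℝ) (v : V)
    (hsym : ∀ x y : V, d x y = d y x)
    (hdiag : ∀ x : V, d x x = 0)
    (htri : ∀ x y z : V, d x z ≤ d x y + d y z)
    (hval : ∀ x y : V, x ≠ y → d x y = 1 ∨ d x y = 2)
    (c : ℕ) (hc : 1 ≤ c)
    (D : (Unit ⊕ Fin c × {x : V // x ≠ v}) → (Unit ⊕ Fin c × {x : V // x ≠ v}) → ℝ)
    (hDuu : D (Sum.inl ()) (Sum.inl ()) = 0)
    (hDvx : ∀ p : Fin c × {x : V // x ≠ v}, D (Sum.inl ()) (Sum.inr p) = d v p.2.1)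
    (hDxv : ∀ p : Fin c × {x : V // x ≠ v}, D (Sum.inr p) (Sum.inl ()) = d p.2.1 v)
    (hDsame : ∀ (i : Fin c) (x y : {x : V // x ≠ v}),
      D (Sum.inr (i, x)) (Sum.inr (i, y)) = d x.1 y.1)
    (hDdiff : ∀ (i j : Fin c) (x y : {x : V // x ≠ v}), i ≠ j →
      D (Sum.inr (i, x)) (Sum.inr (j, y)) = d x.1 v + d v y.1)
    (K : ℝ)
    (σ : Equiv.Perm V) (hσ : σ.IsCycle) (hσs : σ.support = Finset.univ)
    (hK : ∑ x : V, d x (σ x) ≤ K) :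
    ∃ τ : Equiv.Perm (Unit ⊕ Fin c × {x : V // x ≠ v}),
      τ.IsCycle ∧ τ.support = Finset.univ ∧
      ∑ p, D p (τ p) ≤ c * K :=
  stmt_5_general d v c hc D hDvx hDxv hDsame hDdiff K σ hσ hσs hK
end

section
/- If G' (c copies of G glued at v, with metric-completion edge-costs) has a Hamiltonian tour of cost at most cK, then G has a Hamiltonian tour of cost at most K. -/
/-!
A Hamiltonian tour of `G'` of cost at most `cK` starts and ends at the glued vertex `v`.
Projecting it onto the `i`-th copy (sending every vertex outside that copy to `v`) gives a
closed walk through `v` that visits every vertex of `G`, and since an edge between two copies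
costs `d(x,v) + d(v,y)`, the cost of every edge of `G'` is the sum of the costs of its `c`
projections. Hence the `c` projected walks cost at most `cK` in total, the cheapest one at
most `K`, and short-cutting repeated visits (triangle inequality) turns it into a tour of `G`.
-/

section

open List

variable {α β : Type*}

noncomputable def walkCost (f : α → α → ℝ) : α → List α → α → ℝ
  | a, [], b => f a b
  | a, x :: xs, b => f a x + walkCost f x xs b

@[simp] lemma walkCost_nil (f : α → α → ℝ) (a b : α) : walkCost f a [] b = f a b := rfl

@[simp] lemma walkCost_cons (f : α → α → ℝ) (a x b : α) (xs : List α) :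
    walkCost f a (x :: xs) b = f a x + walkCost f x xs b := rfl

lemma walkCost_eq_sum_zipWith (f : α → α → ℝ) :
    ∀ (a : α) (l : List α) (b : α), walkCost f a l b = (zipWith f (a :: l) (l ++ [b])).sum
  | a, [], b => by simp
  | a, x :: xs, b => by simp [walkCost_eq_sum_zipWith f x xs b]

lemma walkCost_le_cons {f : α → α → ℝ} (htri : ∀ x y z, f x z ≤ f x y + f y z)
    (a x b : α) : ∀ l : List α, walkCost f a l b ≤ walkCost f a (x :: l) b
  | [] => htri a x b
  | y :: ys => by
      simpa only [walkCost_cons, ← add_assoc] using add_le_add_left (htri a x y) _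

lemma walkCost_le_of_sublist {f : α → α → ℝ} (htri : ∀ x y z, f x z ≤ f x y + f y z)
    {l₁ l₂ : List α} (h : l₁ <+ l₂) (a b : α) : walkCost f a l₁ b ≤ walkCost f a l₂ b := by
  induction h generalizing a with
  | slnil => rfl
  | cons x _ ih => exact (ih a).trans (walkCost_le_cons htri a x b _)
  | cons_cons x _ ih => exact add_le_add_right (ih x) _

lemma walkCost_fintype_sum {ι : Type*} [Fintype ι] (f : ι → α → α → ℝ) :
    ∀ (a : α) (l : List α) (b : α),
      walkCost (fun p q => ∑ i, f i p q) a l b = ∑ i, walkCost (f i) a l b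
  | a, [], b => rfl
  | a, x :: xs, b => by
      simp only [walkCost_cons, walkCost_fintype_sum f x xs b, Finset.sum_add_distrib]

lemma walkCost_comp (f : β → β → ℝ) (g : α → β) :
    ∀ (a : α) (l : List α) (b : α),
      walkCost (fun p q => f (g p) (g q)) a l b = walkCost f (g a) (l.map g) (g b)
  | a, [], b => rfl
  | a, x :: xs, b => by simp only [walkCost_cons, walkCost_comp f g x xs b, map_cons]

lemma map_formPerm_eq_rotate_one [DecidableEq α] {l : List α} (h : l.Nodup) :
    l.map l.formPerm = l.rotate 1 := by
  rw [← pmap_next_eq_rotate_one _ h, ← pmap_eq_map (fun _ _ => trivial)]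
  exact pmap_congr_left _ fun x hx _ _ => formPerm_apply_mem_eq_next h x hx

lemma sum_formPerm_eq_walkCost [DecidableEq α] (f : α → α → ℝ) {a : α} {r : List α}
    (h : (a :: r).Nodup) :
    ∑ x ∈ (a :: r).toFinset, f x ((a :: r).formPerm x) = walkCost f a r a := by
  have hrot : r ++ [a] = (a :: r).rotate 1 := by simp
  rw [sum_toFinset _ h, walkCost_eq_sum_zipWith, hrot, ← map_formPerm_eq_rotate_one h,
    zipWith_map_right, zipWith_self]

namespace Equiv.Perm

variable [Fintype α] [DecidableEq α]

lemma IsCycle.exists_sum_eq_walkCost {τ : Perm α} (hτ : τ.IsCycle)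
    (hτs : τ.support = Finset.univ) (u : α) :
    ∃ r : List α, (∀ p, p ∈ u :: r) ∧ ∀ f : α → α → ℝ, ∑ p, f p (τ p) = walkCost f u r u := by
  have hsupp : ∀ p, p ∈ τ.support := by simp [hτs]
  have hmem : ∀ p, p ∈ τ.toList u := fun p =>
    mem_toList_iff.mpr ⟨hτ.sameCycle (mem_support.mp (hsupp u)) (mem_support.mp (hsupp p)),
      hsupp u⟩
  obtain ⟨a, r, har⟩ := exists_cons_of_ne_nil (ne_nil_of_mem (hmem u))
  have hau : a = u := by
    simpa [har] using toList_getElem_zero τ u (hsupp u)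
  subst hau
  have hnd : (a :: r).Nodup := har ▸ nodup_toList τ a
  have hform : (a :: r).formPerm = τ := by
    rw [← har, formPerm_toList, hτ.cycleOf_eq (mem_support.mp (hsupp a))]
  have huniv : (a :: r).toFinset = Finset.univ := by
    ext p; simpa [har] using hmem p
  refine ⟨r, har ▸ hmem, fun f => ?_⟩
  rw [← sum_formPerm_eq_walkCost f hnd, huniv, hform]

end Equiv.Perm

open Equiv in
lemma exists_isCycle_sum_le_walkCost [Fintype α] [DecidableEq α]
    (hcard : 2 ≤ Fintype.card α) {f : α → α → ℝ} (htri : ∀ x y z, f x z ≤ f x y + f y z)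
    (v : α) (M : List α) (hM : ∀ x, x ≠ v → x ∈ M) :
    ∃ σ : Perm α, σ.IsCycle ∧ σ.support = Finset.univ ∧ ∑ x, f x (σ x) ≤ walkCost f v M v := by
  set M' := (M.filter (· ≠ v)).dedup
  have hnd : (v :: M').Nodup := nodup_cons.mpr ⟨by simp [M'], nodup_dedup _⟩
  have hmem : ∀ x, x ∈ v :: M' := fun x => by
    by_cases hx : x = v <;> simp [M', hx, hM]
  have huniv : (v :: M').toFinset = Finset.univ := by
    ext x; simpa using hmem x
  have hlen : 2 ≤ (v :: M').length := by
    obtain ⟨w, hw⟩ := Fintype.exists_ne_of_one_lt_card hcard v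
    have : w ∈ M' := (mem_cons.mp (hmem w)).resolve_left hw
    exact Nat.succ_le_succ (length_pos_of_mem this)
  refine ⟨(v :: M').formPerm, isCycle_formPerm hnd hlen, ?_, ?_⟩
  · rw [support_formPerm_of_nodup _ hnd, huniv]
    rintro x hx
    simp [hx] at hlen
  · rw [← huniv, sum_formPerm_eq_walkCost f hnd]
    exact walkCost_le_of_sublist htri ((dedup_sublist _).trans filter_sublist) v v

section Glued

variable {ι V : Type*} [DecidableEq ι] (v : V)

def proj (i : ι) : Unit ⊕ ι × {x : V // x ≠ v} → V
  | Sum.inl _ => v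
  | Sum.inr p => if p.1 = i then p.2.1 else v

@[simp] lemma proj_inl (i : ι) (t : Unit) : proj v i (Sum.inl t) = v := rfl

@[simp] lemma proj_inr (i j : ι) (x : {x : V // x ≠ v}) :
    proj v i (Sum.inr (j, x)) = if j = i then x.1 else v := rfl

lemma mem_map_proj (i : ι) {r : List (Unit ⊕ ι × {x : V // x ≠ v})}
    (hr : ∀ p, p ∈ Sum.inl () :: r) (x : V) (hx : x ≠ v) : x ∈ r.map (proj v i) :=
  mem_map.mpr ⟨Sum.inr (i, ⟨x, hx⟩), by simpa using hr (Sum.inr (i, ⟨x, hx⟩)), by simp⟩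

variable [Fintype ι]

lemma glued_cost_eq_sum_proj {d : V → V → ℝ} (hdiag : ∀ x, d x x = 0)
    {D : (Unit ⊕ ι × {x : V // x ≠ v}) → (Unit ⊕ ι × {x : V // x ≠ v}) → ℝ}
    (hDuu : D (Sum.inl ()) (Sum.inl ()) = 0)
    (hDvx : ∀ p : ι × {x : V // x ≠ v}, D (Sum.inl ()) (Sum.inr p) = d v p.2.1)
    (hDxv : ∀ p : ι × {x : V // x ≠ v}, D (Sum.inr p) (Sum.inl ()) = d p.2.1 v)
    (hDsame : ∀ (i : ι) (x y : {x : V // x ≠ v}),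
      D (Sum.inr (i, x)) (Sum.inr (i, y)) = d x.1 y.1)
    (hDdiff : ∀ (i j : ι) (x y : {x : V // x ≠ v}), i ≠ j →
      D (Sum.inr (i, x)) (Sum.inr (j, y)) = d x.1 v + d v y.1)
    (p q : Unit ⊕ ι × {x : V // x ≠ v}) : D p q = ∑ i, d (proj v i p) (proj v i q) := by
  rcases p with ⟨⟩ | ⟨j, x⟩ <;> rcases q with ⟨⟩ | ⟨k, y⟩
  · simp [hDuu, hdiag]
  · rw [hDvx, Fintype.sum_eq_single k fun i hi => by simp [Ne.symm hi, hdiag]]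
    simp
  · rw [hDxv, Fintype.sum_eq_single j fun i hi => by simp [Ne.symm hi, hdiag]]
    simp
  · by_cases hjk : j = k
    · subst hjk
      rw [hDsame, Fintype.sum_eq_single j fun i hi => by simp [Ne.symm hi, hdiag]]
      simp
    · rw [hDdiff j k x y hjk, Fintype.sum_eq_add j k hjk fun i hi => by
        simp [Ne.symm hi.1, Ne.symm hi.2, hdiag]]
      simp [hjk, Ne.symm hjk]

end Glued

end

theorem stmt_6_general {V : Type*} [Fintype V] [DecidableEq V]
    (hcard : 3 ≤ Fintype.card V)
    (d : V → V → ℝ) (v : V)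
    (hdiag : ∀ x : V, d x x = 0)
    (htri : ∀ x y z : V, d x z ≤ d x y + d y z)
    (c : ℕ) (hc : 1 ≤ c)
    (D : (Unit ⊕ Fin c × {x : V // x ≠ v}) → (Unit ⊕ Fin c × {x : V // x ≠ v}) → ℝ)
    (hDuu : D (Sum.inl ()) (Sum.inl ()) = 0)
    (hDvx : ∀ p : Fin c × {x : V // x ≠ v}, D (Sum.inl ()) (Sum.inr p) = d v p.2.1)
    (hDxv : ∀ p : Fin c × {x : V // x ≠ v}, D (Sum.inr p) (Sum.inl ()) = d p.2.1 v)
    (hDsame : ∀ (i : Fin c) (x y : {x : V // x ≠ v}),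
      D (Sum.inr (i, x)) (Sum.inr (i, y)) = d x.1 y.1)
    (hDdiff : ∀ (i j : Fin c) (x y : {x : V // x ≠ v}), i ≠ j →
      D (Sum.inr (i, x)) (Sum.inr (j, y)) = d x.1 v + d v y.1)
    (K : ℕ)
    (τ : Equiv.Perm (Unit ⊕ Fin c × {x : V // x ≠ v}))
    (hτ : τ.IsCycle) (hτs : τ.support = Finset.univ)
    (hcost : ∑ p, D p (τ p) ≤ (c : ℝ) * K) :
    ∃ σ : Equiv.Perm V, σ.IsCycle ∧ σ.support = Finset.univ ∧
      ∑ x : V, d x (σ x) ≤ (K : ℝ) := by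
  obtain ⟨r, hr, hτcost⟩ := hτ.exists_sum_eq_walkCost hτs (Sum.inl ())
  have hsplit : ∑ p, D p (τ p) = ∑ i : Fin c, walkCost d v (r.map (proj v i)) v := by
    have hD : D = fun p q => ∑ i, d (proj v i p) (proj v i q) := by
      funext p q
      exact glued_cost_eq_sum_proj v hdiag hDuu hDvx hDxv hDsame hDdiff p q
    rw [hτcost, hD, walkCost_fintype_sum]
    exact Finset.sum_congr rfl fun i _ => walkCost_comp d (proj v i) _ r _
  have hle : ∑ i : Fin c, walkCost d v (r.map (proj v i)) v ≤ ∑ _i : Fin c, (K : ℝ) := by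
    simpa [← hsplit] using hcost
  obtain ⟨i, -, hi⟩ := Finset.exists_le_of_sum_le (Finset.univ_nonempty_iff.mpr ⟨⟨0, hc⟩⟩) hle
  obtain ⟨σ, hσ, hσs, hσcost⟩ :=
    exists_isCycle_sum_le_walkCost (by omega) htri v _ (mem_map_proj v i hr)
  exact ⟨σ, hσ, hσs, hσcost.trans hi⟩

/-- If `G'` (the metric completion of `c` copies of `G` glued at `v`) has a Hamiltonian
tour of cost at most `c*K`, then `G` has a Hamiltonian tour of cost at most `K`.
Same encoding as in the forward direction: tours are cyclic permutations with full
support; `Sum.inl ()` is the glued vertex `v`; `K` is a positive integer. -/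
theorem stmt_6 {V : Type*} [Fintype V] [DecidableEq V]
    (hcard : 3 ≤ Fintype.card V)
    (d : V → V → ℝ) (v : V)
    (hsym : ∀ x y : V, d x y = d y x)
    (hdiag : ∀ x : V, d x x = 0)
    (htri : ∀ x y z : V, d x z ≤ d x y + d y z)
    (hval : ∀ x y : V, x ≠ y → d x y = 1 ∨ d x y = 2)
    (c : ℕ) (hc : 1 ≤ c)
    (D : (Unit ⊕ Fin c × {x : V // x ≠ v}) → (Unit ⊕ Fin c × {x : V // x ≠ v}) → ℝ)
    (hDuu : D (Sum.inl ()) (Sum.inl ()) = 0)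
    (hDvx : ∀ p : Fin c × {x : V // x ≠ v}, D (Sum.inl ()) (Sum.inr p) = d v p.2.1)
    (hDxv : ∀ p : Fin c × {x : V // x ≠ v}, D (Sum.inr p) (Sum.inl ()) = d p.2.1 v)
    (hDsame : ∀ (i : Fin c) (x y : {x : V // x ≠ v}),
      D (Sum.inr (i, x)) (Sum.inr (i, y)) = d x.1 y.1)
    (hDdiff : ∀ (i j : Fin c) (x y : {x : V // x ≠ v}), i ≠ j →
      D (Sum.inr (i, x)) (Sum.inr (j, y)) = d x.1 v + d v y.1)
    (K : ℕ) (hK : 0 < K)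
    (τ : Equiv.Perm (Unit ⊕ Fin c × {x : V // x ≠ v}))
    (hτ : τ.IsCycle) (hτs : τ.support = Finset.univ)
    (hcost : ∑ p, D p (τ p) ≤ (c : ℝ) * K) :
    ∃ σ : Equiv.Perm V, σ.IsCycle ∧ σ.support = Finset.univ ∧
      ∑ x : V, d x (σ x) ≤ (K : ℝ) :=
  stmt_6_general hcard d v hdiag htri c hc D hDuu hDvx hDxv hDsame hDdiff K τ hτ hτs hcost
end

section
/- Condition 3 of the L-reduction holds with constant b = 1: given a TTP schedule of cost ν' with ν' ≥ 10m(m+1)(2w_u + cμ' − 4) for the extracted tour cost μ', and OPT(I') ≤ 20w_u m(m+1) + (10m−1)mcμ* + 8m(m+1), it follows that m(m+1)(μ' − μ*) ≤ ν' − OPT(I'), where c ≥ 5, n ≥ 3, m = c(n−1)+1, n ≤ μ* < μ' are integers, w_u = (2cn−1)/2. -/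
/-- Condition 3 of the L-reduction with constant `b = 1`: with `c ≥ 5`, `n ≥ 3`,
`m = c(n−1)+1`, integers `n ≤ μ* < μ'`, `w_u = (2cn−1)/2`, a TTP schedule of cost
`ν' ≥ 10m(m+1)(2w_u + cμ' − 4)` and `OPT(I') ≤ 20w_u·m(m+1) + (10m−1)mcμ* + 8m(m+1)`
imply `m(m+1)(μ' − μ*) ≤ ν' − OPT(I')`. -/
theorem stmt_18 (c n m μ' μ : ℕ) (hc : 5 ≤ c) (hn : 3 ≤ n)
    (hm : m = c * (n - 1) + 1) (h1 : n ≤ μ) (h2 : μ < μ')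
    (w ν' opt : ℝ) (hw : w = (2 * (c : ℝ) * n - 1) / 2)
    (hν : 10 * (m : ℝ) * (m + 1) * (2 * w + c * μ' - 4) ≤ ν')
    (hopt : opt ≤ 20 * w * (m : ℝ) * (m + 1) + (10 * (m : ℝ) - 1) * m * c * μ
        + 8 * m * (m + 1)) :
    (m : ℝ) * (m + 1) * ((μ' : ℝ) - μ) ≤ ν' - opt := by
  have hm11 : 11 ≤ m := by
    have := Nat.mul_le_mul hc (show 2 ≤ n - 1 by omega); omega
  have hm' : (11 : ℝ) ≤ (m : ℝ) := by exact_mod_cast hm11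
  have hc' : (5 : ℝ) ≤ (c : ℝ) := by exact_mod_cast hc
  have h1' : (3 : ℝ) ≤ (μ : ℝ) := by exact_mod_cast le_trans hn h1
  have h2' : (μ : ℝ) + 1 ≤ (μ' : ℝ) := by exact_mod_cast h2
  have hd : (0:ℝ) ≤ (μ':ℝ) - μ - 1 := by linarith
  have hA : (0:ℝ) ≤ ((10 * (c:ℝ) - 1) * m * m - m) * ((μ':ℝ) - μ - 1) := by
    apply mul_nonneg _ hd
    nlinarith [mul_nonneg (show (0:ℝ) ≤ 10*(c:ℝ)-1-49 by linarith)
        (show (0:ℝ) ≤ (m:ℝ) by linarith),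
      mul_nonneg (show (0:ℝ) ≤ (m:ℝ) by linarith) (show (0:ℝ) ≤ (m:ℝ)-11 by linarith), hm']
  nlinarith [hA,
    mul_nonneg (mul_nonneg (by linarith : (0:ℝ) ≤ (m:ℝ)) (by linarith : (0:ℝ) ≤ (c:ℝ)))
      (by linarith : (0:ℝ) ≤ (μ:ℝ) - 3),
    mul_nonneg (mul_nonneg (by linarith : (0:ℝ) ≤ (m:ℝ)) (by linarith : (0:ℝ) ≤ (c:ℝ)))
      (by linarith : (0:ℝ) ≤ (μ':ℝ) - 4),
    mul_nonneg (by linarith : (0:ℝ) ≤ (m:ℝ)) (by linarith : (0:ℝ) ≤ (c:ℝ) - 5),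
    mul_nonneg (mul_nonneg (by linarith : (0:ℝ) ≤ (m:ℝ)) (by linarith : (0:ℝ) ≤ (m:ℝ)))
      (by linarith : (0:ℝ) ≤ (c:ℝ) - 5)]
end
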